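/- arXiv:1304.0444 — 3 statements merged into one kernel-verified Lean document; each statement's English description precedes it below -/
import Mathlib

section
/- Let P be a complex polynomial of degree n with all zeros in the closed unit disk, and let m = min_{|z|=1} |P(z)|. Then for every complex λ with |λ| < 1, the polynomial g(z) = P(z) − λ·m·z^n has all its zeros in the closed unit disk. -/
/-!
For `‖z‖ ≥ 1` write `P z = z ^ n · Q (z⁻¹)` with `Q = P.reverse`. If `m > 0`, then `P` has no zeros
on the unit circle, so all zeros of `P` lie in the open disk and `Q` has no zeros in the closed
disk. The minimum modulus principle then gives `‖Q‖ ≥ m` on the closed disk, hence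
`‖P z‖ ≥ m ‖z‖ ^ n > ‖λ m z ^ n‖` outside it, and `g` has no zeros there. If `m = 0`, then `g = P`.
-/

open Polynomial Complex Metric

theorem Polynomial.eval_reverse_inv_mul_pow {K : Type*} [Field K] (f : K[X]) {x : K}
    (hx : x ≠ 0) : f.reverse.eval x⁻¹ * x ^ f.natDegree = f.eval x := by
  let := invertibleOfNonzero hx
  simpa [eval₂_eq_eval_map] using eval₂_reverse_mul_pow (RingHom.id K) x f

theorem Complex.le_norm_of_forall_mem_frontier_le_norm {E : Type*} [NormedAddCommGroup E]
    [NormedSpace ℂ E] [Nontrivial E] {f : E → ℂ} {U : Set E} (hU : Bornology.IsBounded U)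
    (hd : DiffContOnCl ℂ f U) (hne : ∀ z ∈ closure U, f z ≠ 0) {C : ℝ}
    (hC : ∀ z ∈ frontier U, C ≤ ‖f z‖) {z : E} (hz : z ∈ closure U) : C ≤ ‖f z‖ := by
  rcases le_or_gt C 0 with hC0 | hC0
  · exact hC0.trans (norm_nonneg _)
  have hinv : ‖(f z)⁻¹‖ ≤ C⁻¹ :=
    norm_le_of_forall_mem_frontier_norm_le hU (hd.inv hne)
      (fun w hw => by rw [Pi.inv_apply, norm_inv]; exact inv_anti₀ hC0 (hC w hw)) hz
  rwa [norm_inv, inv_le_inv₀ (norm_pos_iff.mpr (hne z hz)) hC0] at hinv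

section UnitDisk

variable {P : ℂ[X]} (hroots : ∀ w : ℂ, P.eval w = 0 → ‖w‖ ≤ 1)
include hroots

theorem Polynomial.eval_reverse_ne_zero_of_norm_le_one
    (hcircle : ∀ w : ℂ, ‖w‖ = 1 → P.eval w ≠ 0) {u : ℂ} (hu : ‖u‖ ≤ 1) :
    P.reverse.eval u ≠ 0 := by
  have hP : P ≠ 0 := fun h => hcircle 1 norm_one (by simp [h])
  rcases eq_or_ne u 0 with rfl | hu0
  · simpa [← coeff_zero_eq_eval_zero] using hP
  intro hQu
  have hPu : P.eval u⁻¹ = 0 := by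
    rw [← eval_reverse_inv_mul_pow P (inv_ne_zero hu0), inv_inv, hQu, zero_mul]
  have h1 : 1 ≤ ‖u‖ := by
    simpa [norm_inv, inv_le_one₀ (norm_pos_iff.mpr hu0)] using hroots _ hPu
  exact hcircle u⁻¹ (by rw [norm_inv, le_antisymm hu h1, inv_one]) hPu

theorem Polynomial.mul_norm_pow_le_norm_eval {m : ℝ}
    (hm : ∀ w : ℂ, ‖w‖ = 1 → m ≤ ‖P.eval w‖) {z : ℂ} (hz : 1 ≤ ‖z‖) :
    m * ‖z‖ ^ P.natDegree ≤ ‖P.eval z‖ := by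
  rcases le_or_gt m 0 with hm0 | hm0
  · exact (mul_nonpos_of_nonpos_of_nonneg hm0 (by positivity)).trans (norm_nonneg _)
  have hcircle : ∀ w : ℂ, ‖w‖ = 1 → P.eval w ≠ 0 := fun w hw hPw => by
    simpa [hPw] using hm0.trans_le (hm w hw)
  have hz0 : z ≠ 0 := norm_pos_iff.mp (one_pos.trans_le hz)
  have hball : ∀ w ∈ closure (ball (0 : ℂ) 1), P.reverse.eval w ≠ 0 := fun w hw => by
    rw [closure_ball _ one_ne_zero, mem_closedBall_zero_iff] at hw
    exact eval_reverse_ne_zero_of_norm_le_one hroots hcircle hw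
  have hQ : m ≤ ‖P.reverse.eval z⁻¹‖ := by
    refine le_norm_of_forall_mem_frontier_le_norm isBounded_ball
      P.reverse.differentiable.diffContOnCl hball (fun w hw => ?_) ?_
    · rw [frontier_ball _ one_ne_zero, mem_sphere_zero_iff_norm] at hw
      have hw0 : w ≠ 0 := norm_ne_zero_iff.mp (by rw [hw]; exact one_ne_zero)
      have hwinv : ‖w⁻¹‖ = 1 := by rw [norm_inv, hw, inv_one]
      have hrel := eval_reverse_inv_mul_pow P (inv_ne_zero hw0)
      rw [inv_inv] at hrel
      calc m ≤ ‖P.eval w⁻¹‖ := hm _ hwinv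
        _ = ‖P.reverse.eval w‖ := by rw [← hrel, norm_mul, norm_pow, hwinv, one_pow, mul_one]
    · rw [closure_ball _ one_ne_zero, mem_closedBall_zero_iff, norm_inv]
      exact inv_le_one_of_one_le₀ hz
  calc m * ‖z‖ ^ P.natDegree ≤ ‖P.reverse.eval z⁻¹‖ * ‖z‖ ^ P.natDegree := by gcongr
    _ = ‖P.eval z‖ := by rw [← eval_reverse_inv_mul_pow P hz0, norm_mul, norm_pow]

end UnitDisk

theorem stmt_8_general (P : Polynomial ℂ) (n : ℕ) (hdeg : P.natDegree = n)
    (hroots : ∀ w : ℂ, P.eval w = 0 → ‖w‖ ≤ 1)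
    (m : ℝ)
    (hm : IsLeast ((fun z : ℂ => ‖P.eval z‖) '' {z : ℂ | ‖z‖ = 1}) m)
    (lam : ℂ) (hlam : ‖lam‖ < 1) :
    ∀ z : ℂ, P.eval z - lam * m * z ^ n = 0 → ‖z‖ ≤ 1 := by
  intro z hgz
  obtain ⟨⟨w₀, -, hw₀⟩, hlb⟩ := hm
  have hm0 : 0 ≤ m := hw₀ ▸ norm_nonneg _
  by_contra! hz
  have hPz : P.eval z = lam * m * z ^ n := sub_eq_zero.mp hgz
  have hlower := P.mul_norm_pow_le_norm_eval hroots (fun w hw => hlb ⟨w, hw, rfl⟩) hz.le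
  rw [hdeg, hPz, norm_mul, norm_mul, norm_pow, Complex.norm_of_nonneg hm0] at hlower
  have hm_eq : m = 0 := by
    have hzn : 0 < ‖z‖ ^ n := by positivity
    have : 0 < 1 - ‖lam‖ := sub_pos.mpr hlam
    nlinarith [mul_pos this hzn]
  rw [hm_eq, ofReal_zero, mul_zero, zero_mul] at hPz
  exact hz.not_ge (hroots z hPz)

theorem stmt_8 (P : Polynomial ℂ) (n : ℕ) (hn : 1 ≤ n) (hdeg : P.natDegree = n)
    (hroots : ∀ w : ℂ, P.eval w = 0 → ‖w‖ ≤ 1)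
    (m : ℝ)
    (hm : IsLeast ((fun z : ℂ => ‖P.eval z‖) '' {z : ℂ | ‖z‖ = 1}) m)
    (lam : ℂ) (hlam : ‖lam‖ < 1) :
    ∀ z : ℂ, P.eval z - lam * m * z ^ n = 0 → ‖z‖ ≤ 1 :=
  stmt_8_general P n hdeg hroots m hm lam hlam
end

section
/- Let F be a complex polynomial of degree n with all zeros in the closed unit disk, and P a polynomial of degree at most n with |P(z)| ≤ |F(z)| on |z| = 1. Then for all R > r ≥ 1, α, β ∈ ℂ with |α| ≤ 1, |β| ≤ 1, and φ = β(((R+1)/(r+1))^n − |α|) − α, for every |z| ≥ 1: |P(Rz) + φ P(rz)| ≤ |F(Rz) + φ F(rz)|. -/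
open Polynomial Complex Metric Filter Topology ComplexConjugate

/-!
For `‖λ‖ > 1` the polynomial `P - λ F` has degree `n` and all its zeros in the closed unit disk,
because `‖P‖ ≤ ‖F‖` persists outside the disk (maximum modulus for the reversed polynomials, after
cancelling the zeros of `F` on the circle). A polynomial `G` of degree `n` with its zeros in the
closed disk satisfies `‖G (R z)‖ ≥ ((R + 1) / (r + 1)) ^ n * ‖G (r z)‖` for `‖z‖ ≥ 1`, factor by
factor, so `G (R z) + φ G (r z) ≠ 0` when `‖φ‖ < ((R + 1) / (r + 1)) ^ n`. If the inequality failed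
at `z`, then `λ = (P (R z) + φ P (r z)) / (F (R z) + φ F (r z))` would violate this for
`G = P - λ F`. The case `‖φ‖ = ((R + 1) / (r + 1)) ^ n` follows by continuity in `φ`.
-/

lemma add_one_mul_norm_mul_sub_le {r R : ℝ} (hr : 1 ≤ r) (hrR : r ≤ R) {z w : ℂ}
    (hz : 1 ≤ ‖z‖) (hw : ‖w‖ ≤ 1) :
    (R + 1) * ‖(r : ℂ) * z - w‖ ≤ (r + 1) * ‖(R : ℂ) * z - w‖ := by
  have hR : 0 ≤ R := by linarith
  set t := (z * conj w).re
  have ht : 0 ≤ t + ‖z‖ * ‖w‖ := by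
    have := Complex.abs_re_le_norm (z * conj w)
    rw [norm_mul, Complex.norm_conj] at this
    linarith [neg_abs_le t]
  have norm_sq (s : ℝ) : ‖(s : ℂ) * z - w‖ ^ 2 = s ^ 2 * ‖z‖ ^ 2 - 2 * s * t + ‖w‖ ^ 2 := by
    simp only [Complex.sq_norm, Complex.normSq_sub, Complex.normSq_mul, Complex.normSq_ofReal,
      mul_assoc, Complex.re_ofReal_mul, t]
    ring
  rw [← pow_le_pow_iff_left₀ (by positivity) (by positivity) two_ne_zero, mul_pow, mul_pow,
    norm_sq, norm_sq, ← sub_nonneg]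
  -- the difference is increasing in `t`, and at its least value `t = -‖z‖‖w‖` it factors
  have hfactor : (r + 1) ^ 2 * (R ^ 2 * ‖z‖ ^ 2 - 2 * R * t + ‖w‖ ^ 2)
      - (R + 1) ^ 2 * (r ^ 2 * ‖z‖ ^ 2 - 2 * r * t + ‖w‖ ^ 2)
      = 2 * (R - r) * (r * R - 1) * (t + ‖z‖ * ‖w‖) + (R - r) * (‖z‖ - ‖w‖) *
        ((r + 1) * (R * ‖z‖ + ‖w‖) + (R + 1) * (r * ‖z‖ + ‖w‖)) := by ring
  have hRr : 0 ≤ R - r := sub_nonneg.2 hrR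
  have hrR1 : 0 ≤ r * R - 1 := by nlinarith
  have hzw : 0 ≤ ‖z‖ - ‖w‖ := by linarith
  rw [hfactor]
  positivity

lemma norm_mul_sub_sub_le {α β : ℂ} {c : ℝ} (hα : ‖α‖ ≤ c) (hβ : ‖β‖ ≤ 1) :
    ‖β * ((c : ℂ) - ‖α‖) - α‖ ≤ c :=
  calc ‖β * ((c : ℂ) - ‖α‖) - α‖ ≤ ‖β‖ * ‖(c : ℂ) - ‖α‖‖ + ‖α‖ := by
        rw [← norm_mul]; exact norm_sub_le _ _
    _ = ‖β‖ * (c - ‖α‖) + ‖α‖ := by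
        rw [← ofReal_sub, norm_real, Real.norm_of_nonneg (sub_nonneg.2 hα)]
    _ ≤ 1 * (c - ‖α‖) + ‖α‖ := by gcongr
    _ = c := by ring

lemma sub_mul_ne_zero_of_norm_le {K : Type*} [NormedField K] {a b l : K} (hab : ‖a‖ ≤ ‖b‖)
    (hb : b ≠ 0) (hl : 1 < ‖l‖) :
    a - l * b ≠ 0 := by
  rw [sub_ne_zero]
  rintro rfl
  rw [norm_mul] at hab
  exact (lt_mul_of_one_lt_left (norm_pos_iff.2 hb) hl).not_ge hab

lemma norm_eval_eq_mul_prod_roots {K : Type*} [NormedField K] [IsAlgClosed K] (G : K[X]) (x : K) :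
    ‖G.eval x‖ = ‖G.leadingCoeff‖ * (G.roots.map fun w => ‖x - w‖).prod := by
  rw [(IsAlgClosed.splits G).eval_eq_prod_roots, norm_mul]
  congr 1
  simpa [Multiset.map_map] using (Multiset.prod_hom (G.roots.map (x - ·)) (normHom : K →*₀ ℝ)).symm

lemma pow_mul_norm_eval_le {G : ℂ[X]} (hG : ∀ w : ℂ, G.eval w = 0 → ‖w‖ ≤ 1) {r R : ℝ}
    (hr : 1 ≤ r) (hrR : r ≤ R) {z : ℂ} (hz : 1 ≤ ‖z‖) :
    ((R + 1) / (r + 1)) ^ G.natDegree * ‖G.eval (r * z)‖ ≤ ‖G.eval (R * z)‖ := by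
  have hr0 : 0 ≤ r := by linarith
  have hR0 : 0 ≤ R := by linarith
  rw [norm_eval_eq_mul_prod_roots, norm_eval_eq_mul_prod_roots, mul_left_comm,
    ← IsAlgClosed.card_roots_eq_natDegree, ← Multiset.prod_replicate, ← Multiset.map_const',
    ← Multiset.prod_map_mul]
  gcongr
  refine Multiset.prod_map_le_prod_map₀ _ _ (fun _ _ => by positivity) fun w hw => ?_
  rw [div_mul_eq_mul_div, div_le_iff₀ (by positivity), mul_comm _ (r + 1)]
  exact add_one_mul_norm_mul_sub_le hr hrR hz (hG w (isRoot_of_mem_roots hw))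

lemma eval_mul_add_mul_eval_mul_ne_zero {G : ℂ[X]} (hG : ∀ w : ℂ, G.eval w = 0 → ‖w‖ ≤ 1)
    {n : ℕ} (hn : n ≤ G.natDegree) {r R : ℝ} (hr : 1 ≤ r) (hrR : r < R) {z : ℂ} (hz : 1 ≤ ‖z‖)
    {φ : ℂ} (hφ : ‖φ‖ < ((R + 1) / (r + 1)) ^ n) :
    G.eval (R * z) + φ * G.eval (r * z) ≠ 0 := by
  have hk : 1 ≤ (R + 1) / (r + 1) := by rw [one_le_div (by linarith)]; linarith
  have hRz : G.eval (R * z) ≠ 0 := fun h => by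
    have := hG _ h
    rw [norm_mul, norm_real, Real.norm_of_nonneg (by linarith)] at this
    nlinarith
  have hlt : ‖φ * G.eval (r * z)‖ < ‖G.eval (R * z)‖ := by
    obtain h0 | h0 := eq_or_ne (G.eval (r * z)) 0
    · simpa [h0] using hRz
    calc ‖φ * G.eval (r * z)‖ = ‖φ‖ * ‖G.eval (r * z)‖ := norm_mul _ _
      _ < ((R + 1) / (r + 1)) ^ n * ‖G.eval (r * z)‖ := by gcongr
      _ ≤ ((R + 1) / (r + 1)) ^ G.natDegree * ‖G.eval (r * z)‖ := by gcongr
      _ ≤ ‖G.eval (R * z)‖ := pow_mul_norm_eval_le hG hr hrR.le hz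
  intro h
  rw [add_eq_zero_iff_eq_neg] at h
  rw [h, norm_neg] at hlt
  exact hlt.false

lemma mem_closure_sphere_diff_singleton {v : ℂ} (hv : ‖v‖ = 1) :
    v ∈ closure (sphere (0 : ℂ) 1 \ {v}) := by
  have hden (t : ℝ) : (1 : ℂ) - t * I ≠ 0 := fun h => by simpa using congrArg re h
  -- the Cayley transform `t ↦ (1 + t i) / (1 - t i)` maps `ℝ` into the unit circle,
  -- taking the value `1` only at `t = 0`
  let c : ℝ → ℂ := fun t => v * ((1 + t * I) / (1 - t * I))
  have hc : Tendsto c (𝓝[≠] 0) (𝓝 v) := by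
    have : Continuous c := by fun_prop (disch := exact hden _)
    simpa [c] using (this.tendsto 0).mono_left nhdsWithin_le_nhds
  refine mem_closure_of_tendsto hc (eventually_nhdsWithin_of_forall fun t ht => ⟨?_, fun h => ?_⟩)
  · have hconj : ‖(1 : ℂ) - t * I‖ = ‖(1 : ℂ) + t * I‖ := by
      rw [← Complex.norm_conj]; simp
    have hnum : (1 : ℂ) + t * I ≠ 0 := fun h => by simpa using congrArg re h
    simp [c, hv, hconj, hnum]
  · have hv0 : v ≠ 0 := by rintro rfl; simp at hv
    have h1 : (1 + t * I) / (1 - t * I) = 1 :=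
      mul_left_cancel₀ hv0 (by simpa [c] using h)
    rw [div_eq_one_iff_eq (hden t)] at h1
    have : t = -t := by simpa using congrArg im h1
    exact ht (Set.mem_singleton_iff.2 (by linarith))

lemma norm_eval_le_of_forall_norm_le_one_eval_ne_zero {Q G : ℂ[X]}
    (hle : ∀ x : ℂ, ‖x‖ = 1 → ‖Q.eval x‖ ≤ ‖G.eval x‖) (hG : ∀ x : ℂ, ‖x‖ ≤ 1 → G.eval x ≠ 0)
    {w : ℂ} (hw : ‖w‖ ≤ 1) : ‖Q.eval w‖ ≤ ‖G.eval w‖ := by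
  have hd : DiffContOnCl ℂ (fun x => Q.eval x / G.eval x) (ball 0 1) :=
    DifferentiableOn.diffContOnCl_ball (U := {x | G.eval x ≠ 0})
      (Q.differentiable.differentiableOn.div G.differentiable.differentiableOn fun _ hx => hx)
      fun x hx => hG x (by simpa using hx)
  have hfrontier : ∀ x ∈ frontier (ball (0 : ℂ) 1), ‖Q.eval x / G.eval x‖ ≤ 1 := by
    intro x hx
    rw [frontier_ball _ one_ne_zero, mem_sphere_zero_iff_norm] at hx
    rw [norm_div, div_le_one (norm_pos_iff.2 (hG x hx.le))]
    exact hle x hx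
  have := norm_le_of_forall_mem_frontier_norm_le isBounded_ball hd hfrontier
    (by simpa [closure_ball _ one_ne_zero] using hw)
  rwa [norm_div, div_le_one (norm_pos_iff.2 (hG w hw))] at this

lemma norm_eval_le_of_forall_norm_lt_one_eval_ne_zero {Q G : ℂ[X]}
    (hle : ∀ x : ℂ, ‖x‖ = 1 → ‖Q.eval x‖ ≤ ‖G.eval x‖) (hG : ∀ x : ℂ, ‖x‖ < 1 → G.eval x ≠ 0)
    {w : ℂ} (hw : ‖w‖ ≤ 1) : ‖Q.eval w‖ ≤ ‖G.eval w‖ := by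
  induction hN : G.natDegree using Nat.strong_induction_on generalizing Q G with
  | _ N ih =>
  by_cases hv : ∃ v : ℂ, ‖v‖ = 1 ∧ G.IsRoot v
  · -- a root of `G` on the circle is a root of `Q`, and the common factor can be cancelled
    obtain ⟨v, hv, hGv⟩ := hv
    have hQv : Q.IsRoot v := norm_le_zero_iff.1 (by simpa [hGv.eq_zero] using hle v hv)
    obtain ⟨G', rfl⟩ := dvd_iff_isRoot.2 hGv
    obtain ⟨Q', rfl⟩ := dvd_iff_isRoot.2 hQv
    have hG' : G' ≠ 0 := by rintro rfl; exact hG 0 (by simp) (by simp)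
    have hlt : G'.natDegree < N := by
      rw [← hN, natDegree_mul (X_sub_C_ne_zero v) hG', natDegree_X_sub_C]; omega
    have hle_punctured : ∀ x : ℂ, ‖x‖ = 1 → x ≠ v → ‖Q'.eval x‖ ≤ ‖G'.eval x‖ := by
      intro x hx hxv
      have := hle x hx
      simp only [eval_mul, norm_mul] at this
      exact le_of_mul_le_mul_left this (by simpa [sub_eq_zero] using hxv)
    have hle_sphere : ∀ x : ℂ, ‖x‖ = 1 → ‖Q'.eval x‖ ≤ ‖G'.eval x‖ := by
      intro x hx
      obtain rfl | hxv := eq_or_ne x v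
      · exact closure_minimal (t := {y | ‖Q'.eval y‖ ≤ ‖G'.eval y‖})
          (fun y hy => hle_punctured y (by simpa using hy.1) hy.2)
          (isClosed_le (by fun_prop) (by fun_prop)) (mem_closure_sphere_diff_singleton hx)
      · exact hle_punctured x hx hxv
    simp only [eval_mul, norm_mul]
    gcongr
    exact ih _ hlt hle_sphere (fun x hx h => hG x hx (by simp [h])) rfl
  · simp only [not_exists, not_and] at hv
    exact norm_eval_le_of_forall_norm_le_one_eval_ne_zero hle
      (fun x hx => hx.lt_or_eq.elim (hG x) (hv x)) hw

lemma eval_reflect_of_natDegree_le {K : Type*} [Field K] {p : K[X]} {n : ℕ}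
    (hp : p.natDegree ≤ n) {y : K} (hy : y ≠ 0) : (p.reflect n).eval y = y ^ n * p.eval y⁻¹ := by
  have : Invertible y⁻¹ := invertibleOfNonzero (inv_ne_zero hy)
  have := eval₂_reflect_mul_pow (RingHom.id K) y⁻¹ n p hp
  rw [invOf_eq_inv, inv_inv, ← eval, ← eval] at this
  rw [← this, mul_left_comm, ← mul_pow, mul_inv_cancel₀ hy, one_pow, mul_one]

lemma eval_zero_reflect {R : Type*} [Semiring R] (p : R[X]) (n : ℕ) :
    (p.reflect n).eval 0 = p.coeff n := by
  simp [← coeff_zero_eq_eval_zero, coeff_reflect]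

section

variable {F P : ℂ[X]} {n : ℕ}

lemma coeff_ne_zero_of_roots_norm_le_one (hdeg : F.natDegree = n)
    (hroots : ∀ w : ℂ, F.eval w = 0 → ‖w‖ ≤ 1) : F.coeff n ≠ 0 := by
  have hF : F ≠ 0 := by rintro rfl; simpa using hroots 2 eval_zero
  rwa [← hdeg, coeff_natDegree, leadingCoeff_ne_zero]

lemma norm_eval_reflect_le (hdeg : F.natDegree = n) (hroots : ∀ w : ℂ, F.eval w = 0 → ‖w‖ ≤ 1)
    (hP : P.natDegree ≤ n) (hle : ∀ z : ℂ, ‖z‖ = 1 → ‖P.eval z‖ ≤ ‖F.eval z‖)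
    {w : ℂ} (hw : ‖w‖ ≤ 1) : ‖(P.reflect n).eval w‖ ≤ ‖(F.reflect n).eval w‖ := by
  refine norm_eval_le_of_forall_norm_lt_one_eval_ne_zero (fun x hx => ?_) (fun x hx => ?_) hw
  · have hx0 : x ≠ 0 := by rintro rfl; simp at hx
    rw [eval_reflect_of_natDegree_le hP hx0, eval_reflect_of_natDegree_le hdeg.le hx0,
      norm_mul, norm_mul]
    gcongr
    exact hle _ (by simp [hx])
  · obtain rfl | hx0 := eq_or_ne x 0
    · rw [eval_zero_reflect]
      exact coeff_ne_zero_of_roots_norm_le_one hdeg hroots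
    · rw [eval_reflect_of_natDegree_le hdeg.le hx0]
      refine mul_ne_zero (pow_ne_zero _ hx0) fun h => ?_
      have := hroots _ h
      rw [norm_inv, inv_le_one₀ (norm_pos_iff.2 hx0)] at this
      exact this.not_gt hx

lemma norm_eval_le_of_one_le_norm (hdeg : F.natDegree = n)
    (hroots : ∀ w : ℂ, F.eval w = 0 → ‖w‖ ≤ 1) (hP : P.natDegree ≤ n)
    (hle : ∀ z : ℂ, ‖z‖ = 1 → ‖P.eval z‖ ≤ ‖F.eval z‖) {z : ℂ} (hz : 1 ≤ ‖z‖) :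
    ‖P.eval z‖ ≤ ‖F.eval z‖ := by
  have hz0 : z⁻¹ ≠ 0 := inv_ne_zero (norm_pos_iff.1 (one_pos.trans_le hz))
  have := norm_eval_reflect_le hdeg hroots hP hle (w := z⁻¹)
    (by simpa using inv_le_one_of_one_le₀ hz)
  rw [eval_reflect_of_natDegree_le hP hz0, eval_reflect_of_natDegree_le hdeg.le hz0, inv_inv,
    norm_mul, norm_mul] at this
  exact le_of_mul_le_mul_left this (norm_pos_iff.2 (pow_ne_zero _ hz0))

lemma norm_coeff_le (hdeg : F.natDegree = n) (hroots : ∀ w : ℂ, F.eval w = 0 → ‖w‖ ≤ 1)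
    (hP : P.natDegree ≤ n) (hle : ∀ z : ℂ, ‖z‖ = 1 → ‖P.eval z‖ ≤ ‖F.eval z‖) :
    ‖P.coeff n‖ ≤ ‖F.coeff n‖ := by
  simpa [eval_zero_reflect] using norm_eval_reflect_le hdeg hroots hP hle (w := 0) (by simp)

variable {r R : ℝ} {z : ℂ}

lemma norm_eval_mul_add_mul_eval_mul_le_of_norm_lt (hdeg : F.natDegree = n)
    (hroots : ∀ w : ℂ, F.eval w = 0 → ‖w‖ ≤ 1) (hP : P.natDegree ≤ n)
    (hle : ∀ z : ℂ, ‖z‖ = 1 → ‖P.eval z‖ ≤ ‖F.eval z‖) (hr : 1 ≤ r) (hrR : r < R)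
    (hz : 1 ≤ ‖z‖) {φ : ℂ} (hφ : ‖φ‖ < ((R + 1) / (r + 1)) ^ n) :
    ‖P.eval (R * z) + φ * P.eval (r * z)‖ ≤ ‖F.eval (R * z) + φ * F.eval (r * z)‖ := by
  by_contra! hlt
  set den := F.eval (R * z) + φ * F.eval (r * z)
  have hden : den ≠ 0 := eval_mul_add_mul_eval_mul_ne_zero hroots hdeg.ge hr hrR hz hφ
  set l := (P.eval (R * z) + φ * P.eval (r * z)) / den
  have hl : 1 < ‖l‖ := by rwa [norm_div, one_lt_div (norm_pos_iff.2 hden)]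
  -- `P - l F` has its zeros in the closed disk, yet `l` is chosen so that
  -- `(P - l F) (R z) + φ (P - l F) (r z) = 0`
  have hroots' : ∀ w : ℂ, (P - C l * F).eval w = 0 → ‖w‖ ≤ 1 := by
    intro w hw
    by_contra! hw1
    have hFw : F.eval w ≠ 0 := fun h => (hroots w h).not_gt hw1
    refine sub_mul_ne_zero_of_norm_le
      (norm_eval_le_of_one_le_norm hdeg hroots hP hle hw1.le) hFw hl (by simpa using hw)
  have hcoeff : (P - C l * F).coeff n ≠ 0 := by
    simpa using sub_mul_ne_zero_of_norm_le (norm_coeff_le hdeg hroots hP hle)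
      (coeff_ne_zero_of_roots_norm_le_one hdeg hroots) hl
  refine eval_mul_add_mul_eval_mul_ne_zero hroots' (le_natDegree_of_ne_zero hcoeff) hr hrR hz hφ ?_
  simp only [eval_sub, eval_mul, eval_C]
  linear_combination -(div_mul_cancel₀ (P.eval (R * z) + φ * P.eval (r * z)) hden)

lemma norm_eval_mul_add_mul_eval_mul_le (hdeg : F.natDegree = n)
    (hroots : ∀ w : ℂ, F.eval w = 0 → ‖w‖ ≤ 1) (hP : P.natDegree ≤ n)
    (hle : ∀ z : ℂ, ‖z‖ = 1 → ‖P.eval z‖ ≤ ‖F.eval z‖) (hr : 1 ≤ r) (hrR : r < R)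
    (hz : 1 ≤ ‖z‖) {φ : ℂ} (hφ : ‖φ‖ ≤ ((R + 1) / (r + 1)) ^ n) :
    ‖P.eval (R * z) + φ * P.eval (r * z)‖ ≤ ‖F.eval (R * z) + φ * F.eval (r * z)‖ := by
  have hk : 0 < ((R + 1) / (r + 1)) ^ n := pow_pos (div_pos (by linarith) (by linarith)) n
  have hball : closure (ball (0 : ℂ) (((R + 1) / (r + 1)) ^ n)) ⊆
      {ψ : ℂ | ‖P.eval (R * z) + ψ * P.eval (r * z)‖ ≤ ‖F.eval (R * z) + ψ * F.eval (r * z)‖} :=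
    closure_minimal (fun ψ hψ => norm_eval_mul_add_mul_eval_mul_le_of_norm_lt hdeg hroots hP hle
      hr hrR hz (by simpa using hψ)) (isClosed_le (by fun_prop) (by fun_prop))
  rw [closure_ball _ hk.ne'] at hball
  exact hball (by simpa using hφ)

end

theorem stmt_15 (F P : Polynomial ℂ) (n : ℕ) (hdeg : F.natDegree = n)
    (hroots : ∀ w : ℂ, F.eval w = 0 → ‖w‖ ≤ 1)
    (hP : P.natDegree ≤ n)
    (hle : ∀ z : ℂ, ‖z‖ = 1 → ‖P.eval z‖ ≤ ‖F.eval z‖)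
    (R r : ℝ) (hr : 1 ≤ r) (hRr : r < R)
    (α β : ℂ) (hα : ‖α‖ ≤ 1) (hβ : ‖β‖ ≤ 1)
    (φ : ℂ) (hφ : φ = β * ((((R + 1) / (r + 1)) ^ n : ℝ) - ‖α‖) - α) :
    ∀ z : ℂ, 1 ≤ ‖z‖ →
      ‖P.eval ((R : ℂ) * z) + φ * P.eval ((r : ℂ) * z)‖ ≤
        ‖F.eval ((R : ℂ) * z) + φ * F.eval ((r : ℂ) * z)‖ := by
  intro z hz
  have hk : 1 ≤ (R + 1) / (r + 1) := by rw [one_le_div (by linarith)]; linarith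
  have hφk : ‖φ‖ ≤ ((R + 1) / (r + 1)) ^ n := by
    rw [hφ]
    exact norm_mul_sub_sub_le (hα.trans (one_le_pow₀ hk)) hβ
  exact norm_eval_mul_add_mul_eval_mul_le hdeg hroots hP hle hr hRr hz hφk
end

section
/- Let P be a complex polynomial of degree n with no zeros in the open unit disk, m = min_{|z|=1}|P(z)|, and P* its conjugate-reverse polynomial. For R > r ≥ 1, α, β ∈ ℂ with |α| ≤ 1, |β| ≤ 1, and φ = β(((R+1)/(r+1))^n − |α|) − α, for every |z| = 1: |P(Rz) + φ P(rz)| ≤ |P*(Rz) + φ P*(rz)| − (|R^n + φ r^n| − |1 + φ|) · m. -/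
/-
Write `T f = f (R z) + φ f (r z)` and `K = ((R + 1) / (r + 1)) ^ n`. If `h` has degree `n` and all
its zeros in the closed unit disk, comparing the linear factors one by one gives
`|h (R z)| ≥ K |h (r z)|`, so `T h ≠ 0` as soon as `|φ| < K`.

If `Q` of degree `n` has no zeros in the open disk, then `|Q| ≤ |Q*|` outside it, so for `|μ| > 1`
the polynomial `Q - μ Q*` again has degree `n` and all its zeros in the closed disk; hence
`T Q ≠ μ T Q*`, i.e. `|T Q| ≤ |T Q*|`.

By the minimum modulus principle `|P| ≥ m` on the closed disk, so `Q = P - conj t * m` is zero-free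
in the open disk for `|t| < 1`, with `Q* = P* - t m X ^ n`. Hence `T P* ≠ t m T X ^ n`, giving
`|T P*| ≥ m |T X ^ n|`, and `|T P - conj t m T 1| ≤ |T P* - t m T X ^ n|`, by continuity also for
`|t| = 1`. Choosing `t` so that `t m T X ^ n` points along `T P*` gives the inequality. The
boundary case `|φ| = K` follows by continuity in `φ`.
-/

open Polynomial Complex ComplexConjugate

lemma norm_ofReal_mul_sub_sq (t : ℝ) {z : ℂ} (hz : ‖z‖ = 1) (w : ℂ) :
    ‖(t : ℂ) * z - w‖ ^ 2 = t ^ 2 - 2 * t * (z * conj w).re + ‖w‖ ^ 2 := by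
  rw [Complex.sq_norm, Complex.sq_norm, normSq_sub, normSq_mul, normSq_ofReal, ← Complex.sq_norm z,
    hz, mul_assoc (t : ℂ), re_ofReal_mul]
  ring

lemma add_one_mul_norm_sub_le {r R : ℝ} (hr : 1 ≤ r) (hrR : r ≤ R) {z w : ℂ} (hz : ‖z‖ = 1)
    (hw : ‖w‖ ≤ 1) : (R + 1) * ‖(r : ℂ) * z - w‖ ≤ (r + 1) * ‖(R : ℂ) * z - w‖ := by
  rw [← sq_le_sq₀ (by have := norm_nonneg ((r : ℂ) * z - w); nlinarith)
    (by have := norm_nonneg ((R : ℂ) * z - w); nlinarith), mul_pow, mul_pow,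
    norm_ofReal_mul_sub_sq r hz, norm_ofReal_mul_sub_sq R hz]
  set u := (z * conj w).re
  have hu : -‖w‖ ≤ u := by
    refine neg_le_of_abs_le ((abs_re_le_norm _).trans ?_)
    rw [norm_mul, norm_conj, hz, one_mul]
  have := norm_nonneg w
  -- the difference of the squares is `(R - r) * (2 (r R - 1) (u + ‖w‖)`
  -- `+ (1 - ‖w‖) ((r + 1) (R + ‖w‖) + (R + 1) (r + ‖w‖)))`
  nlinarith [mul_nonneg (mul_nonneg (sub_nonneg.2 hrR) (by nlinarith : (0 : ℝ) ≤ r * R - 1))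
      (by linarith : 0 ≤ u + ‖w‖),
    mul_nonneg (mul_nonneg (sub_nonneg.2 hrR) (sub_nonneg.2 hw))
      (by nlinarith : (0 : ℝ) ≤ (r + 1) * (R + ‖w‖) + (R + 1) * (r + ‖w‖))]

lemma norm_sub_le_norm_one_sub_conj_mul {x w : ℂ} (hx : 1 ≤ ‖x‖) (hw : 1 ≤ ‖w‖) :
    ‖x - w‖ ≤ ‖1 - conj x * w‖ := by
  have hre : (x * conj w).re = (1 * conj (conj x * w)).re := by simp [mul_comm]
  rw [← sq_le_sq₀ (norm_nonneg _) (norm_nonneg _), Complex.sq_norm, Complex.sq_norm, normSq_sub,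
    normSq_sub, hre, normSq_mul, normSq_conj, normSq_one, ← Complex.sq_norm, ← Complex.sq_norm]
  nlinarith [mul_nonneg (sub_nonneg.2 (one_le_pow₀ (n := 2) hx))
    (sub_nonneg.2 (one_le_pow₀ (n := 2) hw))]

lemma norm_le_of_eq_mul_sub {α β φ : ℂ} {K : ℝ} (hα : ‖α‖ ≤ 1) (hβ : ‖β‖ ≤ 1) (hK : 1 ≤ K)
    (hφ : φ = β * ((K : ℂ) - ‖α‖) - α) : ‖φ‖ ≤ K := by
  have hw : ‖(K : ℂ) - ‖α‖‖ = K - ‖α‖ := by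
    rw [← ofReal_sub, norm_real, Real.norm_of_nonneg (by linarith)]
  calc ‖φ‖ ≤ ‖β‖ * (K - ‖α‖) + ‖α‖ := by rw [hφ, ← hw, ← norm_mul]; exact norm_sub_le _ _
    _ ≤ 1 * (K - ‖α‖) + ‖α‖ := by gcongr; linarith
    _ = K := by ring

lemma norm_le_norm_of_forall_ne_mul {B ζ : ℂ} (h : ∀ t : ℂ, ‖t‖ < 1 → B ≠ t * ζ) : ‖ζ‖ ≤ ‖B‖ := by
  by_contra! hlt
  have hζ : ζ ≠ 0 := norm_pos_iff.1 ((norm_nonneg B).trans_lt hlt)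
  exact h (B / ζ) (by rwa [norm_div, div_lt_one (norm_pos_iff.2 hζ)]) (div_mul_cancel₀ B hζ).symm

lemma norm_le_of_forall_norm_sub_le {A B a ζ : ℂ} (hζB : ‖ζ‖ ≤ ‖B‖)
    (h : ∀ t : ℂ, ‖t‖ ≤ 1 → ‖A - conj t * a‖ ≤ ‖B - t * ζ‖) : ‖A‖ ≤ ‖B‖ - ‖ζ‖ + ‖a‖ := by
  rcases eq_or_ne ζ 0 with rfl | hζ
  · have h0 := h 0 (by simp)
    simp only [map_zero, zero_mul, sub_zero] at h0
    linarith [norm_nonneg a, norm_zero (E := ℂ)]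
  have hB : B ≠ 0 := norm_pos_iff.1 ((norm_pos_iff.2 hζ).trans_le hζB)
  -- with `t = s * (B / ζ)`, `t * ζ` points along `B`, so `‖B - t * ζ‖ = ‖B‖ - ‖ζ‖`
  set s : ℝ := ‖ζ‖ / ‖B‖
  have hs : ‖(s : ℂ) * (B / ζ)‖ = 1 := by
    rw [norm_mul, norm_div, norm_real, Real.norm_of_nonneg (by positivity)]
    simp only [s]
    field_simp
  have hAB := h (s * (B / ζ)) hs.le
  rw [mul_assoc, div_mul_cancel₀ _ hζ, ← one_sub_mul, ← ofReal_one, ← ofReal_sub, norm_mul,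
    norm_real, Real.norm_of_nonneg (sub_nonneg.2 ((div_le_one (norm_pos_iff.2 hB)).2 hζB)),
    sub_mul, one_mul, div_mul_cancel₀ _ (norm_ne_zero_iff.2 hB)] at hAB
  have := norm_sub_norm_le A (conj (s * (B / ζ)) * a)
  rw [norm_mul, norm_conj, hs, one_mul] at this
  linarith

lemma le_of_forall_norm_lt {E : Type*} [NormedAddCommGroup E] [NormedSpace ℝ E] {f g : E → ℝ}
    (hf : Continuous f) (hg : Continuous g) {ρ : ℝ} (hρ : ρ ≠ 0)
    (h : ∀ x, ‖x‖ < ρ → f x ≤ g x) {x : E} (hx : ‖x‖ ≤ ρ) : f x ≤ g x := by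
  have : Metric.closedBall (0 : E) ρ ⊆ {x | f x ≤ g x} := by
    rw [← closure_ball _ hρ]
    exact closure_minimal (fun x hx => h x (mem_ball_zero_iff.1 hx)) (isClosed_le hf hg)
  exact this (mem_closedBall_zero_iff.2 hx)

lemma norm_eval_eq_mul_prod_roots_s18 (p : ℂ[X]) (x : ℂ) :
    ‖p.eval x‖ = ‖p.leadingCoeff‖ * (p.roots.map fun w => ‖x - w‖).prod := by
  rw [(IsAlgClosed.splits p).eval_eq_prod_roots, norm_mul, ← normHom_apply (Multiset.prod _),
    map_multiset_prod, Multiset.map_map]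
  rfl

lemma pow_mul_norm_eval_le_of_roots {p : ℂ[X]} {x y : ℂ} {c d : ℝ} (hc : 0 ≤ c)
    (h : ∀ w ∈ p.roots, c * ‖x - w‖ ≤ d * ‖y - w‖) :
    c ^ p.natDegree * ‖p.eval x‖ ≤ d ^ p.natDegree * ‖p.eval y‖ := by
  have key := Multiset.prod_map_le_prod_map₀ _ _ (fun w _ => by positivity) h
  rw [Multiset.prod_map_mul, Multiset.prod_map_mul, Multiset.map_const', Multiset.map_const',
    Multiset.prod_replicate, Multiset.prod_replicate, IsAlgClosed.card_roots_eq_natDegree] at key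
  rw [norm_eval_eq_mul_prod_roots_s18, norm_eval_eq_mul_prod_roots_s18, mul_left_comm, mul_left_comm _ ‖_‖]
  exact mul_le_mul_of_nonneg_left key (norm_nonneg _)

lemma norm_leadingCoeff_le_norm_coeff_zero {p : ℂ[X]} (hp : ∀ w, ‖w‖ < 1 → p.eval w ≠ 0) :
    ‖p.leadingCoeff‖ ≤ ‖p.coeff 0‖ := by
  rw [coeff_zero_eq_eval_zero, norm_eval_eq_mul_prod_roots_s18]
  refine le_mul_of_one_le_right (norm_nonneg _) (Multiset.one_le_prod_map fun w hw => ?_)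
  rw [zero_sub, norm_neg]
  exact not_lt.1 fun h => hp w h (isRoot_of_mem_roots hw)

lemma le_norm_eval_of_norm_le_one {P : ℂ[X]} (hnz : ∀ v, ‖v‖ < 1 → P.eval v ≠ 0) {m : ℝ}
    (hm : ∀ v, ‖v‖ = 1 → m ≤ ‖P.eval v‖) {w : ℂ} (hw : ‖w‖ ≤ 1) : m ≤ ‖P.eval w‖ := by
  rcases le_or_gt m 0 with hm0 | hm0
  · exact hm0.trans (norm_nonneg _)
  have hP : ∀ v, ‖v‖ ≤ 1 → P.eval v ≠ 0 := fun v hv => by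
    rcases hv.eq_or_lt with hv | hv
    · exact norm_pos_iff.1 (hm0.trans_le (hm v hv))
    · exact hnz v hv
  have hd : DiffContOnCl ℂ (fun v => (P.eval v)⁻¹) (Metric.ball 0 1) :=
    (P.differentiable.differentiableOn.inv fun v hv => hP v (by
      simpa [closure_ball _ one_ne_zero] using hv)).diffContOnCl
  have hfr : ∀ v ∈ frontier (Metric.ball (0 : ℂ) 1), ‖(P.eval v)⁻¹‖ ≤ m⁻¹ := by
    rw [frontier_ball _ one_ne_zero]
    intro v hv
    rw [norm_inv]
    exact inv_anti₀ hm0 (hm v (mem_sphere_zero_iff_norm.1 hv))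
  have := Complex.norm_le_of_forall_mem_frontier_norm_le Metric.isBounded_ball hd hfr
    (by rwa [closure_ball _ one_ne_zero, mem_closedBall_zero_iff])
  rwa [norm_inv, inv_le_inv₀ (norm_pos_iff.2 (hP w hw)) hm0] at this

/-- `z ↦ z ^ n * conj (p (1 / conj z))`; for `n = p.natDegree` this is the paper's `p*`. -/
noncomputable def conjReflect (n : ℕ) (p : ℂ[X]) : ℂ[X] := reflect n (p.map (starRingEnd ℂ))

section conjReflect

variable {n : ℕ} {p : ℂ[X]}

lemma coeff_conjReflect (i : ℕ) : (conjReflect n p).coeff i = conj (p.coeff (revAt n i)) := by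
  rw [conjReflect, coeff_reflect, coeff_map]

lemma coeff_conjReflect_self : (conjReflect n p).coeff n = conj (p.coeff 0) := by
  rw [coeff_conjReflect, revAt_le le_rfl, Nat.sub_self]

lemma natDegree_conjReflect_le (hp : p.natDegree ≤ n) : (conjReflect n p).natDegree ≤ n :=
  natDegree_le_iff_coeff_eq_zero.2 fun i hi => by
    rw [coeff_conjReflect, revAt_eq_self_of_lt hi,
      coeff_eq_zero_of_natDegree_lt (hp.trans_lt hi), map_zero]

lemma natDegree_conjReflect (hp : p.natDegree ≤ n) (h0 : p.coeff 0 ≠ 0) :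
    (conjReflect n p).natDegree = n :=
  (natDegree_conjReflect_le hp).antisymm
    (le_natDegree_of_ne_zero (by rwa [coeff_conjReflect_self, _root_.map_ne_zero]))

lemma conjReflect_sub_C (a : ℂ) :
    conjReflect n (p - C a) = conjReflect n p - C (conj a) * X ^ n := by
  rw [conjReflect, conjReflect, Polynomial.map_sub, map_C, reflect_sub, reflect_C]

lemma eval_conjReflect (hp : p.natDegree ≤ n) {x : ℂ} (hx : x ≠ 0) :
    (conjReflect n p).eval x = x ^ n * conj (p.eval (conj x)⁻¹) := by
  let := invertibleOfNonzero (inv_ne_zero hx)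
  have h := eval₂_reflect_mul_pow (RingHom.id ℂ) x⁻¹ n (p.map (starRingEnd ℂ))
    (natDegree_map_le.trans hp)
  rw [invOf_eq_inv, inv_inv, ← eval, ← eval, eval_map] at h
  rw [conjReflect, ← eval₂_at_apply, map_inv₀, conj_conj, ← h, mul_left_comm, ← mul_pow,
    mul_inv_cancel₀ hx, one_pow, mul_one]

lemma eval_conjReflect_ne_zero (hp : p.natDegree ≤ n) (hnz : ∀ v, ‖v‖ < 1 → p.eval v ≠ 0)
    {w : ℂ} (hw : 1 < ‖w‖) : (conjReflect n p).eval w ≠ 0 := by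
  have hw0 : w ≠ 0 := norm_pos_iff.1 (one_pos.trans hw)
  rw [eval_conjReflect hp hw0]
  refine mul_ne_zero (pow_ne_zero n hw0) ((_root_.map_ne_zero _).2 (hnz _ ?_))
  rwa [norm_inv, norm_conj, inv_lt_one₀ (one_pos.trans hw)]

lemma norm_eval_le_norm_eval_conjReflect (hp : p.natDegree = n)
    (hnz : ∀ v, ‖v‖ < 1 → p.eval v ≠ 0) {x : ℂ} (hx : 1 ≤ ‖x‖) :
    ‖p.eval x‖ ≤ ‖(conjReflect n p).eval x‖ := by
  have hx0 : x ≠ 0 := norm_pos_iff.1 (one_pos.trans_le hx)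
  rw [eval_conjReflect hp.le hx0, norm_mul, norm_conj, norm_pow, ← hp]
  simpa using pow_mul_norm_eval_le_of_roots (p := p) (y := (conj x)⁻¹) zero_le_one fun w hw => by
    rw [one_mul, ← norm_conj x, ← norm_mul, mul_sub, mul_inv_cancel₀ ((_root_.map_ne_zero _).2 hx0)]
    exact norm_sub_le_norm_one_sub_conj_mul hx
      (not_lt.1 fun h => hnz w h (isRoot_of_mem_roots hw))

end conjReflect

noncomputable def twoRadiiEval (R r : ℝ) (φ z : ℂ) : ℂ[X] →ₗ[ℂ] ℂ :=
  leval ((R : ℂ) * z) + φ • leval ((r : ℂ) * z)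

@[simp]
lemma twoRadiiEval_apply (R r : ℝ) (φ z : ℂ) (p : ℂ[X]) :
    twoRadiiEval R r φ z p = p.eval ((R : ℂ) * z) + φ * p.eval ((r : ℂ) * z) :=
  rfl

section twoRadiiEval

variable {r R : ℝ} {φ z : ℂ} {p : ℂ[X]}

lemma twoRadiiEval_ne_zero (hr : 1 ≤ r) (hrR : r < R) (hz : ‖z‖ = 1)
    (hφ : ‖φ‖ < ((R + 1) / (r + 1)) ^ p.natDegree) (hp : ∀ w, 1 < ‖w‖ → p.eval w ≠ 0) :
    twoRadiiEval R r φ z p ≠ 0 := by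
  have hR : 0 < ‖p.eval ((R : ℂ) * z)‖ := norm_pos_iff.2 <| hp _ <| by
    rw [norm_mul, hz, mul_one, norm_real, Real.norm_of_nonneg (by linarith)]
    linarith
  have hgrowth : ((R + 1) / (r + 1)) ^ p.natDegree * ‖p.eval ((r : ℂ) * z)‖
      ≤ ‖p.eval ((R : ℂ) * z)‖ := by
    have := pow_mul_norm_eval_le_of_roots (x := r * z) (y := R * z) (by linarith) fun w hw =>
      add_one_mul_norm_sub_le hr hrR.le hz <| not_lt.1 fun h => hp w h (isRoot_of_mem_roots hw)
    rwa [div_pow, div_mul_eq_mul_div, div_le_iff₀ (by positivity), mul_comm _ ((r + 1) ^ _)]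
  intro h
  have : ‖p.eval ((R : ℂ) * z)‖ = ‖φ‖ * ‖p.eval ((r : ℂ) * z)‖ := by
    rw [twoRadiiEval_apply, add_eq_zero_iff_eq_neg] at h
    rw [h, norm_neg, norm_mul]
  rcases (norm_nonneg (p.eval ((r : ℂ) * z))).eq_or_lt with hb | hb
  · rw [← hb, mul_zero] at this
    linarith
  · nlinarith [mul_lt_mul_of_pos_right hφ hb]

lemma twoRadiiEval_conjReflect_ne_zero (hr : 1 ≤ r) (hrR : r < R) (hz : ‖z‖ = 1)
    (hφ : ‖φ‖ < ((R + 1) / (r + 1)) ^ p.natDegree) (hnz : ∀ v, ‖v‖ < 1 → p.eval v ≠ 0) :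
    twoRadiiEval R r φ z (conjReflect p.natDegree p) ≠ 0 := by
  have h0 : p.coeff 0 ≠ 0 := coeff_zero_eq_eval_zero p ▸ hnz 0 (by simp)
  refine twoRadiiEval_ne_zero hr hrR hz ?_ fun w => eval_conjReflect_ne_zero le_rfl hnz
  rwa [natDegree_conjReflect le_rfl h0]

lemma norm_twoRadiiEval_le (hr : 1 ≤ r) (hrR : r < R) (hz : ‖z‖ = 1)
    (hφ : ‖φ‖ < ((R + 1) / (r + 1)) ^ p.natDegree) (hnz : ∀ v, ‖v‖ < 1 → p.eval v ≠ 0) :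
    ‖twoRadiiEval R r φ z p‖ ≤ ‖twoRadiiEval R r φ z (conjReflect p.natDegree p)‖ := by
  set n := p.natDegree
  set q := conjReflect n p
  have hTq : twoRadiiEval R r φ z q ≠ 0 := twoRadiiEval_conjReflect_ne_zero hr hrR hz hφ hnz
  by_contra! hlt
  set μ := twoRadiiEval R r φ z p / twoRadiiEval R r φ z q
  have hμ : 1 < ‖μ‖ := by rwa [norm_div, one_lt_div (norm_pos_iff.2 hTq)]
  -- `p - μ q` is killed by the operator, yet has degree `n` and no zeros outside the closed disk
  have hcoeff : (p - C μ * q).coeff n ≠ 0 := by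
    rw [coeff_sub, coeff_C_mul, coeff_conjReflect_self, sub_ne_zero]
    intro h
    have := norm_leadingCoeff_le_norm_coeff_zero hnz
    rw [leadingCoeff, h, norm_mul, norm_conj] at this
    nlinarith [norm_pos_iff.2 (coeff_zero_eq_eval_zero p ▸ hnz 0 (by simp))]
  have hdeg : (p - C μ * q).natDegree = n :=
    ((natDegree_sub_le_iff_left ((natDegree_C_mul_le _ _).trans
      (natDegree_conjReflect_le le_rfl))).2 le_rfl).antisymm (le_natDegree_of_ne_zero hcoeff)
  refine twoRadiiEval_ne_zero (φ := φ) hr hrR hz (hdeg ▸ hφ) ?_ ?_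
  · intro w hw h
    rw [eval_sub, eval_mul, eval_C, sub_eq_zero] at h
    have hpq := norm_eval_le_norm_eval_conjReflect rfl hnz hw.le
    rw [h, norm_mul] at hpq
    nlinarith [norm_pos_iff.2 (eval_conjReflect_ne_zero le_rfl hnz hw)]
  · rw [map_sub, ← smul_eq_C_mul, map_smul, smul_eq_mul, div_mul_cancel₀ _ hTq, sub_self]

lemma norm_twoRadiiEval_le_sub (hr : 1 ≤ r) (hrR : r < R) (hz : ‖z‖ = 1)
    (hφ : ‖φ‖ < ((R + 1) / (r + 1)) ^ p.natDegree)
    (hnz : ∀ v, ‖v‖ < 1 → p.eval v ≠ 0) {m : ℝ} (hm0 : 0 ≤ m)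
    (hm : ∀ v, ‖v‖ ≤ 1 → m ≤ ‖p.eval v‖) :
    ‖twoRadiiEval R r φ z p‖ ≤ ‖twoRadiiEval R r φ z (conjReflect p.natDegree p)‖ -
      (‖(R : ℂ) ^ p.natDegree + φ * (r : ℂ) ^ p.natDegree‖ - ‖1 + φ‖) * m := by
  set n := p.natDegree
  set A := twoRadiiEval R r φ z p
  set B := twoRadiiEval R r φ z (conjReflect n p)
  set a : ℂ := m * (1 + φ)
  set ζ : ℂ := m * (z ^ n * ((R : ℂ) ^ n + φ * (r : ℂ) ^ n))
  -- perturb `p` by constants of modulus less than `m`, which keeps it zero-free in the disk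
  set Q : ℂ → ℂ[X] := fun t => p - C (conj t * m)
  have hQdeg (t : ℂ) : (Q t).natDegree = n := natDegree_sub_C
  have hQnz (t : ℂ) (ht : ‖t‖ < 1) (v : ℂ) (hv : ‖v‖ < 1) : (Q t).eval v ≠ 0 := by
    intro h
    rw [eval_sub, eval_C, sub_eq_zero] at h
    have hmv := hm v hv.le
    rw [h, norm_mul, norm_conj, norm_real, Real.norm_of_nonneg hm0] at hmv
    have hm_zero : m = 0 := by nlinarith [norm_nonneg t]
    exact hnz v hv (by rw [h, hm_zero, ofReal_zero, mul_zero])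
  have hTQ (t : ℂ) : twoRadiiEval R r φ z (Q t) = A - conj t * a := by
    simp only [Q, A, a, twoRadiiEval_apply, eval_sub, eval_C]
    ring
  have hTQstar (t : ℂ) : twoRadiiEval R r φ z (conjReflect n (Q t)) = B - t * ζ := by
    rw [conjReflect_sub_C, map_mul, conj_conj, conj_ofReal]
    simp only [B, ζ, twoRadiiEval_apply, eval_sub, eval_mul, eval_C, eval_pow, eval_X]
    ring
  have hζB : ‖ζ‖ ≤ ‖B‖ := norm_le_norm_of_forall_ne_mul fun t ht h => by
    refine twoRadiiEval_conjReflect_ne_zero hr hrR hz (hφ := (hQdeg t).symm ▸ hφ)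
      (hQnz t ht) ?_
    rw [hQdeg, hTQstar, h, sub_self]
  have hAB (t : ℂ) (ht : ‖t‖ ≤ 1) : ‖A - conj t * a‖ ≤ ‖B - t * ζ‖ := by
    refine le_of_forall_norm_lt (f := fun t => ‖A - conj t * a‖) (g := fun t => ‖B - t * ζ‖)
      (by fun_prop) (by fun_prop) one_ne_zero (fun s hs => ?_) ht
    rw [← hTQ, ← hTQstar, ← hQdeg s]
    exact norm_twoRadiiEval_le hr hrR hz ((hQdeg s).symm ▸ hφ) (hQnz s hs)
  have := norm_le_of_forall_norm_sub_le hζB hAB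
  simp only [ζ, a, norm_mul, norm_real, Real.norm_of_nonneg hm0, norm_pow, hz, one_pow,
    one_mul] at this
  linarith

end twoRadiiEval

theorem stmt_18 (P : Polynomial ℂ) (n : ℕ) (hdeg : P.natDegree = n)
    (hnz : ∀ z : ℂ, ‖z‖ < 1 → P.eval z ≠ 0)
    (m : ℝ)
    (hm : IsLeast ((fun z : ℂ => ‖P.eval z‖) '' {z : ℂ | ‖z‖ = 1}) m)
    (Pstar : Polynomial ℂ)
    (hPstar : Pstar = Polynomial.reflect n (P.map (starRingEnd ℂ)))
    (R r : ℝ) (hr : 1 ≤ r) (hRr : r < R)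
    (α β : ℂ) (hα : ‖α‖ ≤ 1) (hβ : ‖β‖ ≤ 1)
    (φ : ℂ) (hφ : φ = β * ((((R + 1) / (r + 1)) ^ n : ℝ) - ‖α‖) - α) :
    ∀ z : ℂ, ‖z‖ = 1 →
      ‖P.eval ((R : ℂ) * z) + φ * P.eval ((r : ℂ) * z)‖ ≤
        ‖Pstar.eval ((R : ℂ) * z) + φ * Pstar.eval ((r : ℂ) * z)‖ -
          (‖(R : ℂ) ^ n + φ * (r : ℂ) ^ n‖ - ‖1 + φ‖) * m := by
  intro z hz
  subst hdeg hPstar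
  have hK : 1 ≤ ((R + 1) / (r + 1)) ^ P.natDegree :=
    one_le_pow₀ ((one_le_div (by linarith)).2 (by linarith))
  have hm0 : 0 ≤ m := by
    obtain ⟨v, -, rfl⟩ := hm.1
    exact norm_nonneg _
  have hmin (v : ℂ) : ‖v‖ ≤ 1 → m ≤ ‖P.eval v‖ :=
    le_norm_eval_of_norm_le_one hnz fun v hv => hm.2 ⟨v, hv, rfl⟩
  exact le_of_forall_norm_lt
    (f := fun ψ => ‖P.eval ((R : ℂ) * z) + ψ * P.eval ((r : ℂ) * z)‖)
    (g := fun ψ => ‖(conjReflect P.natDegree P).eval ((R : ℂ) * z) +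
      ψ * (conjReflect P.natDegree P).eval ((r : ℂ) * z)‖ -
        (‖(R : ℂ) ^ P.natDegree + ψ * (r : ℂ) ^ P.natDegree‖ - ‖1 + ψ‖) * m)
    (by fun_prop) (by fun_prop) (by positivity)
    (fun ψ hψ => norm_twoRadiiEval_le_sub hr hRr hz hψ hnz hm0 hmin)
    (norm_le_of_eq_mul_sub hα hβ hK (by simpa using hφ))
end
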